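/- arXiv:0907.3970 — 4 statements merged into one kernel-verified Lean document; each statement's English description precedes it below -/
import Mathlib

section
/- Let q = 2^r, let λ be the canonical additive character of F_q, and let a ∈ F_q*. Then the 2-dimensional Kloosterman sum satisfies K₂(λ;a) = K(λ;a)² − q. -/
open scoped Classical
open Finset Matrix

noncomputable section

/-- The trace map `tr : F_q → F_2`, viewed inside `F`:
`tr(x) = x + x² + ⋯ + x^(2^(r−1))`. -/
def trF (F : Type*) [Field F] (r : ℕ) (x : F) : F :=
  ∑ i ∈ Finset.range r, x ^ (2 ^ i)

/-- The canonical additive character `λ(x) = (−1)^(tr x)`, valued in `ℚ`. -/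
def lam (F : Type*) [Field F] (r : ℕ) (x : F) : ℚ :=
  if trF F r x = 0 then 1 else -1

/-- The Kloosterman sum `K(λ;a)`. -/
def Kl (F : Type*) [Field F] [Fintype F] (r : ℕ) (a : F) : ℚ :=
  ∑ α : Fˣ, lam F r ((α : F) + a * ((α : F))⁻¹)

/-- The 2-dimensional Kloosterman sum `K₂(λ;a)`. -/
def Kl2 (F : Type*) [Field F] [Fintype F] (r : ℕ) (a : F) : ℚ :=
  ∑ α : Fˣ, ∑ β : Fˣ, lam F r ((α : F) + (β : F) + a * ((α : F))⁻¹ * ((β : F))⁻¹)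

/-- The m-dimensional Kloosterman sum `K_m(λ;a)`; `K₀(λ;a) = λ(a)`. -/
def Klm (F : Type*) [Field F] [Fintype F] (r m : ℕ) (a : F) : ℚ :=
  ∑ α : Fin m → Fˣ, lam F r ((∑ i, ((α i : F))) + a * ∏ i, ((α i : F))⁻¹)

/-- Power moments of Kloosterman sums, `MK^h`. -/
def MK (F : Type*) [Field F] [Fintype F] (r h : ℕ) : ℚ :=
  ∑ a : Fˣ, (Kl F r (a : F)) ^ h

/-- Power moments of 2-dimensional Kloosterman sums, `MK₂^h`. -/
def MK2 (F : Type*) [Field F] [Fintype F] (r h : ℕ) : ℚ :=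
  ∑ a : Fˣ, (Kl2 F r (a : F)) ^ h

/-- Stirling numbers of the second kind. -/
def stirl (h t : ℕ) : ℚ :=
  (1 / (t.factorial : ℚ)) *
    ∑ j ∈ Finset.range (t + 1), (-1 : ℚ) ^ (t - j) * (t.choose j : ℚ) * (j : ℚ) ^ h

/-- Binomial coefficient `binom(b,a)` with the convention that it is `0`
when `a < 0` or `a > b`. -/
def binomQ (b a : ℤ) : ℚ :=
  if 0 ≤ a ∧ a ≤ b then (b.toNat.choose a.toNat : ℚ) else 0

/-- The q-binomial coefficient `[n,r]_q`. -/
def qbinom (q n r : ℕ) : ℚ :=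
  ∏ j ∈ Finset.range r, ((q : ℚ) ^ (n - j) - 1) / ((q : ℚ) ^ (r - j) - 1)

/-- `A⁻(n,q)`. -/
def Aneg (q n : ℕ) : ℚ :=
  (q : ℚ) ^ ((5 * n ^ 2 - 1) / 4) * qbinom q n 1 *
    ∏ j ∈ Finset.range ((n - 1) / 2), ((q : ℚ) ^ (2 * (j + 1) - 1) - 1)

/-- `B⁻(n,q)`. -/
def Bneg (q n : ℕ) : ℚ :=
  (q : ℚ) ^ ((n - 1) ^ 2 / 4) * ((q : ℚ) ^ n - 1) *
    ∏ j ∈ Finset.range ((n - 1) / 2), ((q : ℚ) ^ (2 * (j + 1)) - 1)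

/-- `A⁺(n,q)`. -/
def Apos (q n : ℕ) : ℚ :=
  (q : ℚ) ^ ((5 * n ^ 2 - 2 * n) / 4) * qbinom q n 2 *
    ∏ j ∈ Finset.range ((n - 2) / 2), ((q : ℚ) ^ (2 * (j + 1) - 1) - 1)

/-- `B⁺(n,q)`. -/
def Bpos (q n : ℕ) : ℚ :=
  (q : ℚ) ^ ((n - 2) ^ 2 / 4) * ((q : ℚ) ^ n - 1) * ((q : ℚ) ^ (n - 1) - 1) *
    ∏ j ∈ Finset.range ((n - 2) / 2), ((q : ℚ) ^ (2 * (j + 1)) - 1)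

/-- The type of `2n × 2n` matrices over `F`. -/
abbrev Mat (F : Type*) (n : ℕ) := Matrix (Fin n ⊕ Fin n) (Fin n ⊕ Fin n) F

/-- The maximal parabolic subgroup `P(2n,q)` of `Sp(2n,q)`, as a set of matrices. -/
def Pmat (F : Type*) [Field F] (n : ℕ) : Set (Mat F n) :=
  {w | ∃ A B : Matrix (Fin n) (Fin n) F, IsUnit A ∧ Bᵀ = B ∧
        w = Matrix.fromBlocks A 0 0 (A⁻¹)ᵀ * Matrix.fromBlocks 1 B 0 1}

/-- The element `σ_r ∈ Sp(2n,q)`. -/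
def sigmaMat (F : Type*) [Field F] (n r : ℕ) : Mat F n :=
  Matrix.fromBlocks
    (Matrix.of fun i j : Fin n => if i = j ∧ r ≤ (i : ℕ) then 1 else 0)
    (Matrix.of fun i j : Fin n => if i = j ∧ (i : ℕ) < r then 1 else 0)
    (Matrix.of fun i j : Fin n => if i = j ∧ (i : ℕ) < r then 1 else 0)
    (Matrix.of fun i j : Fin n => if i = j ∧ r ≤ (i : ℕ) then 1 else 0)

/-- The double coset `P σ_r P` in `Sp(2n,q)`. -/
def DCoset (F : Type*) [Field F] (n r : ℕ) : Set (Mat F n) :=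
  {w | ∃ p ∈ Pmat F n, ∃ p' ∈ Pmat F n, w = p * sigmaMat F n r * p'}

/-- `DC⁻(n,q) = P σ_(n−1) P`. -/
def DCneg (F : Type*) [Field F] (n : ℕ) : Set (Mat F n) := DCoset F n (n - 1)

/-- `DC⁺(n,q) = P σ_(n−2) P`. -/
def DCpos (F : Type*) [Field F] (n : ℕ) : Set (Mat F n) := DCoset F n (n - 2)

/-- `N_S(β) = |{w ∈ S : Tr w = β}|`. -/
def NDC (F : Type*) [Field F] [Fintype F] (n : ℕ) (S : Set (Mat F n)) (β : F) : ℕ :=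
  (Finset.univ.filter fun w => w ∈ S ∧ Matrix.trace w = β).card

/-- Hamming weight of a binary word. -/
def wordWeight {α : Type*} [Fintype α] (u : α → ZMod 2) : ℕ :=
  (Finset.univ.filter fun x => u x = 1).card

/-- The number of codewords of Hamming weight `j` in the binary code `C(S)`
consisting of all `u ∈ F_2^S` with `∑_{w ∈ S} u(w)·Tr(w) = 0` in `F`. -/
def weightCount (F : Type*) [Field F] [Fintype F] (n : ℕ) (S : Set (Mat F n)) (j : ℕ) : ℕ :=
  Nat.card {u : S → ZMod 2 //
    (∑ w : S, if u w = 1 then Matrix.trace (w : Mat F n) else 0) = 0 ∧ wordWeight u = j}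

/-- The Kloosterman sum `K(ψ;a)` for a general (complex-valued) additive character. -/
def KlC (F : Type*) [Field F] [Fintype F] (ψ : AddChar F ℂ) (a : F) : ℂ :=
  ∑ α : Fˣ, ψ ((α : F) + a * ((α : F))⁻¹)

/-- The Kloosterman sum `K_{GL(t,q)}(ψ;a)` for the general linear group. -/
def KGL (F : Type*) [Field F] [Fintype F] (ψ : AddChar F ℂ) (t : ℕ) (a : F) : ℂ :=
  ∑ w : Matrix.GeneralLinearGroup (Fin t) F,
    ψ (Matrix.trace (w : Matrix (Fin t) (Fin t) F) +
       a * Matrix.trace ((↑(w⁻¹) : Matrix (Fin t) (Fin t) F)))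

/-- The exponential sum `∑_{w ∈ S} ψ(Tr w)` over a set of matrices. -/
def expSum (F : Type*) [Field F] [Fintype F] (n : ℕ) (S : Set (Mat F n))
    (ψ : AddChar F ℂ) : ℂ :=
  ∑ w ∈ Finset.univ.filter (fun w => w ∈ S), ψ (Matrix.trace w)

/-- The exponential sum `∑_{w ∈ S} λ(a·Tr w)` over a set of matrices. -/
def expSumQ (F : Type*) [Field F] [Fintype F] (r n : ℕ) (S : Set (Mat F n)) (a : F) : ℚ :=
  ∑ w ∈ Finset.univ.filter (fun w => w ∈ S), lam F r (a * Matrix.trace w)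

/-- `tr` as a map to `ZMod 2`. -/
def trZ (F : Type*) [Field F] (r : ℕ) (x : F) : ZMod 2 :=
  if trF F r x = 0 then 0 else 1

section CarlitzAux

variable {F : Type*} [Field F] [Fintype F] {r : ℕ}

/-- square root in char 2 -/
def sqrtF (r : ℕ) (x : F) : F := x ^ (2 ^ (r - 1))

lemma aux_char2 (hr : 0 < r) (hF : Fintype.card F = 2 ^ r) : (2 : F) = 0 := by
  have h := FiniteField.cast_card_eq_zero F
  rw [hF] at h
  push_cast at h
  exact (pow_eq_zero_iff hr.ne').mp h

lemma aux_charP (hr : 0 < r) (hF : Fintype.card F = 2 ^ r) : CharP F 2 :=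
  (CharP.charP_iff_prime_eq_zero Nat.prime_two).mpr (aux_char2 hr hF)

lemma aux_add_self (hr : 0 < r) (hF : Fintype.card F = 2 ^ r) (x : F) : x + x = 0 := by
  rw [← two_mul, aux_char2 hr hF, zero_mul]

lemma aux_pow_card (hF : Fintype.card F = 2 ^ r) (x : F) : x ^ 2 ^ r = x := by
  rw [← hF]; exact FiniteField.pow_card x

lemma sqrtF_sq (hr : 0 < r) (hF : Fintype.card F = 2 ^ r) (x : F) :
    (sqrtF r x) ^ 2 = x := by
  rw [sqrtF, ← pow_mul]
  have h : 2 ^ (r - 1) * 2 = 2 ^ r := by rw [← pow_succ]; congr 1; omega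
  rw [h, aux_pow_card hF]

lemma sq_sqrtF (hr : 0 < r) (hF : Fintype.card F = 2 ^ r) (x : F) :
    sqrtF r (x ^ 2) = x := by
  rw [sqrtF, ← pow_mul]
  have h : 2 * 2 ^ (r - 1) = 2 ^ r := by rw [mul_comm, ← pow_succ]; congr 1; omega
  rw [h, aux_pow_card hF]

lemma trF_add (hr : 0 < r) (hF : Fintype.card F = 2 ^ r) (x y : F) :
    trF F r (x + y) = trF F r x + trF F r y := by
  haveI : CharP F 2 := aux_charP hr hF
  haveI : Fact (Nat.Prime 2) := ⟨Nat.prime_two⟩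
  unfold trF
  rw [← Finset.sum_add_distrib]
  exact Finset.sum_congr rfl fun i _ => add_pow_char_pow ..

lemma trF_shift (hr : 0 < r) (hF : Fintype.card F = 2 ^ r) (x : F) :
    ∑ i ∈ Finset.range r, x ^ 2 ^ (i + 1) = trF F r x := by
  have h1 := Finset.sum_range_succ' (fun i => x ^ 2 ^ i) r
  have h2 := Finset.sum_range_succ (fun i => x ^ 2 ^ i) r
  simp only [pow_zero, pow_one] at h1
  rw [aux_pow_card hF] at h2
  have := h1.symm.trans h2
  unfold trF
  exact add_right_cancel this

lemma trF_sq (hr : 0 < r) (hF : Fintype.card F = 2 ^ r) (x : F) :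
    trF F r (x ^ 2) = trF F r x := by
  have : trF F r (x ^ 2) = ∑ i ∈ Finset.range r, x ^ 2 ^ (i + 1) := by
    unfold trF
    refine Finset.sum_congr rfl fun i _ => ?_
    rw [← pow_mul, pow_succ]
    congr 1
    exact Nat.mul_comm 2 _
  rw [this, trF_shift hr hF]

lemma trF_mem (hr : 0 < r) (hF : Fintype.card F = 2 ^ r) (x : F) :
    trF F r x = 0 ∨ trF F r x = 1 := by
  haveI : CharP F 2 := aux_charP hr hF
  haveI : Fact (Nat.Prime 2) := ⟨Nat.prime_two⟩
  have hsq : trF F r x ^ 2 = trF F r x := by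
    have h1 : trF F r x ^ 2 = trF F r (x ^ 2) := by
      unfold trF
      rw [sum_pow_char]
      refine Finset.sum_congr rfl fun i _ => ?_
      rw [← pow_mul, ← pow_mul, mul_comm]
    rw [h1, trF_sq hr hF]
  have hmul : trF F r x * (trF F r x - 1) = 0 := by ring_nf; linear_combination hsq
  rcases mul_eq_zero.mp hmul with h | h
  · exact Or.inl h
  · exact Or.inr (by linear_combination h)

lemma lam_add (hr : 0 < r) (hF : Fintype.card F = 2 ^ r) (x y : F) :
    lam F r (x + y) = lam F r x * lam F r y := by
  unfold lam
  rcases trF_mem hr hF x with hx | hx <;> rcases trF_mem hr hF y with hy | hy <;>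
    simp only [trF_add hr hF, hx, hy, add_zero, zero_add, if_true, if_pos rfl]
  · norm_num
  · simp [one_ne_zero]
  · simp [one_ne_zero]
  · have h11 : (1 : F) + 1 = 0 := by
      have := aux_char2 hr hF; linear_combination this
    simp [h11]

lemma lam_sq (x : F) (hr : 0 < r) (hF : Fintype.card F = 2 ^ r) :
    lam F r (x ^ 2) = lam F r x := by
  unfold lam
  rw [trF_sq hr hF]

lemma lam_zero' : lam F r 0 = 1 := by
  have h : trF F r (0 : F) = 0 := by
    unfold trF
    refine Finset.sum_eq_zero fun i _ => ?_
    exact zero_pow (by positivity)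
  simp [lam, h]

lemma exists_trF_ne (hr : 0 < r) (hF : Fintype.card F = 2 ^ r) :
    ∃ c : F, trF F r c ≠ 0 := by
  by_contra h
  push_neg at h
  set p : Polynomial F := ∑ i ∈ Finset.range r, Polynomial.X ^ (2 ^ i) with hp
  have heval : ∀ x : F, p.eval x = 0 := fun x => by
    rw [hp]
    rw [Polynomial.eval_finset_sum]
    simpa [trF] using h x
  have hpne : p ≠ 0 := by
    intro h0
    have hc : p.coeff 1 = 1 := by
      rw [hp, Polynomial.finset_sum_coeff]
      rw [Finset.sum_eq_single_of_mem 0 (Finset.mem_range.mpr hr)]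
      · simp
      · intro i _ hi
        have h1 : 1 < 2 ^ i := Nat.one_lt_pow hi (by norm_num)
        rw [Polynomial.coeff_X_pow, if_neg h1.ne]
    rw [h0] at hc
    simp at hc
  have hdeg : p.natDegree < Fintype.card F := by
    have hle : p.natDegree ≤ 2 ^ (r - 1) := by
      rw [hp]
      refine Polynomial.natDegree_sum_le_of_forall_le _ _ fun i hi => ?_
      rw [Polynomial.natDegree_X_pow]
      exact Nat.pow_le_pow_right (by norm_num) (by
        have := Finset.mem_range.mp hi; omega)
    calc p.natDegree ≤ 2 ^ (r - 1) := hle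
      _ < 2 ^ r := Nat.pow_lt_pow_right (by norm_num) (by omega)
      _ = Fintype.card F := hF.symm
  exact hpne (Polynomial.eq_zero_of_natDegree_lt_card_of_eval_eq_zero p
    Function.injective_id (fun x => heval x) hdeg)

lemma sum_lam_univ (hr : 0 < r) (hF : Fintype.card F = 2 ^ r) :
    ∑ x : F, lam F r x = 0 := by
  obtain ⟨c, hc⟩ := exists_trF_ne hr hF
  have hlc : lam F r c = -1 := by simp [lam, hc]
  have h1 : ∑ x : F, lam F r (x + c) = ∑ x : F, lam F r x :=
    Fintype.sum_equiv (Equiv.addRight c) _ _ (fun x => rfl)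
  have h2 : ∑ x : F, lam F r (x + c) = (∑ x : F, lam F r x) * (-1) := by
    rw [← hlc, Finset.sum_mul]
    exact Finset.sum_congr rfl fun x _ => lam_add hr hF x c
  rw [h2] at h1
  linarith

lemma sum_units_eq (f : F → ℚ) :
    ∑ α : Fˣ, f (α : F) = ∑ x ∈ Finset.univ.filter (fun x : F => x ≠ 0), f x := by
  have h1 : ∑ x ∈ Finset.univ.filter (fun x : F => x ≠ 0), f x
      = ∑ x : {x : F // x ≠ 0}, f x :=
    Finset.sum_subtype _ (fun x => by simp) f
  rw [h1]
  exact Fintype.sum_equiv unitsEquivNeZero _ _ (fun α => rfl)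

end CarlitzAux

/-- Theorem of Carlitz: `K₂(λ;a) = K(λ;a)² − q`. -/
theorem K2_eq_K_sq_sub_q
    (F : Type*) [Field F] [Fintype F] (r q : ℕ) (hr : 0 < r) (hq : q = 2 ^ r)
    (hF : Fintype.card F = q) (a : F) (ha : a ≠ 0) :
    Kl2 F r a = Kl F r a ^ 2 - (q : ℚ) := by
  subst hq
  have h2 : (2 : F) = 0 := aux_char2 hr hF
  have hxx : ∀ x : F, x + x = 0 := aux_add_self hr hF
  set s : Finset F := Finset.univ.filter (fun x : F => x ≠ 0) with hs
  set s2 : Finset F := Finset.univ.filter (fun c : F => c ≠ 0 ∧ c ≠ 1) with hs2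
  have hmem : ∀ x : F, x ∈ s ↔ x ≠ 0 := fun x => by rw [hs]; simp
  have hmem2 : ∀ x : F, x ∈ s2 ↔ x ≠ 0 ∧ x ≠ 1 := fun x => by rw [hs2]; simp
  have hsum_ne : ∀ {α β : F}, α ≠ β → α + β ≠ 0 := by
    intro α β hne h0
    exact hne (by linear_combination h0 - hxx β)
  have hp1 : ∀ {γ : F}, γ ≠ 1 → γ + 1 ≠ 0 := by
    intro γ hγ h0
    have h11 : (1 : F) + 1 = 0 := by rw [one_add_one_eq_two]; exact h2
    exact hγ (by linear_combination h0 - h11)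
  -- conversions from unit sums to finset sums
  have hKl : Kl F r a = ∑ x ∈ s, lam F r (x + a * x⁻¹) :=
    sum_units_eq (fun x => lam F r (x + a * x⁻¹))
  have hKl2 : Kl2 F r a = ∑ x ∈ s, ∑ y ∈ s, lam F r (x + y + a * x⁻¹ * y⁻¹) := by
    have step : ∀ x : F, (∑ β : Fˣ, lam F r (x + (β : F) + a * x⁻¹ * ((β : F))⁻¹))
        = ∑ y ∈ s, lam F r (x + y + a * x⁻¹ * y⁻¹) := fun x =>
      sum_units_eq (fun y => lam F r (x + y + a * x⁻¹ * y⁻¹))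
    calc Kl2 F r a = ∑ α : Fˣ, ∑ y ∈ s, lam F r ((α : F) + y + a * ((α : F))⁻¹ * y⁻¹) :=
          Finset.sum_congr rfl fun α _ => step (α : F)
      _ = ∑ x ∈ s, ∑ y ∈ s, lam F r (x + y + a * x⁻¹ * y⁻¹) :=
          sum_units_eq (fun x => ∑ y ∈ s, lam F r (x + y + a * x⁻¹ * y⁻¹))
  have hsq : Kl F r a ^ 2 = ∑ x ∈ s, ∑ y ∈ s, lam F r (x + y + (a * x⁻¹ + a * y⁻¹)) := by
    rw [hKl, sq, Finset.sum_mul_sum]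
    refine Finset.sum_congr rfl fun x _ => Finset.sum_congr rfl fun y _ => ?_
    rw [← lam_add hr hF]
    congr 1
    ring
  have hsplit : ∀ G : F → F → ℚ, (∑ x ∈ s, ∑ y ∈ s, G x y)
      = (∑ x ∈ s, G x x) + ∑ x ∈ s, ∑ y ∈ s.erase x, G x y := by
    intro G
    rw [← Finset.sum_add_distrib]
    exact Finset.sum_congr rfl fun x hx => (Finset.add_sum_erase s (G x) hx).symm
  have hcards : (s.card : ℚ) = 2 ^ r - 1 := by
    have h1 : s.card = 2 ^ r - 1 := by
      rw [hs, Finset.filter_ne', Finset.card_erase_of_mem (Finset.mem_univ 0),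
        Finset.card_univ, hF]
    rw [h1, Nat.cast_sub (Nat.one_le_pow _ _ (by norm_num))]
    push_cast
    norm_num
  have hdiag1 : (∑ x ∈ s, lam F r (x + x + (a * x⁻¹ + a * x⁻¹))) = (2 : ℚ) ^ r - 1 := by
    have h1 : ∀ x ∈ s, lam F r (x + x + (a * x⁻¹ + a * x⁻¹)) = 1 := fun x _ => by
      rw [hxx, hxx, add_zero, lam_zero']
    rw [Finset.sum_congr rfl h1, Finset.sum_const, nsmul_eq_mul, mul_one, hcards]
  have hsum_s : (∑ y ∈ s, lam F r y) = -1 := by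
    have h0 : lam F r 0 + ∑ y ∈ Finset.univ.erase (0 : F), lam F r y = ∑ y : F, lam F r y :=
      Finset.add_sum_erase _ _ (Finset.mem_univ 0)
    rw [sum_lam_univ hr hF, lam_zero'] at h0
    have hse : s = Finset.univ.erase (0 : F) := by rw [hs, Finset.filter_ne']
    rw [hse]
    linarith
  have hdiag2 : (∑ x ∈ s, lam F r (x + x + a * x⁻¹ * x⁻¹)) = -1 := by
    have h1 : ∀ x ∈ s, lam F r (x + x + a * x⁻¹ * x⁻¹) = lam F r (a * x⁻¹ * x⁻¹) :=
      fun x _ => by rw [hxx, zero_add]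
    rw [Finset.sum_congr rfl h1]
    have hbij : (∑ x ∈ s, lam F r (a * x⁻¹ * x⁻¹)) = ∑ y ∈ s, lam F r y := by
      refine Finset.sum_nbij' (fun x => a * x⁻¹ * x⁻¹) (fun y => sqrtF r (a * y⁻¹))
        ?_ ?_ ?_ ?_ ?_
      · intro x hx
        rw [hmem] at hx ⊢
        exact mul_ne_zero (mul_ne_zero ha (inv_ne_zero hx)) (inv_ne_zero hx)
      · intro y hy
        rw [hmem] at hy ⊢
        intro h0
        have hk := sqrtF_sq hr hF (a * y⁻¹)
        rw [h0] at hk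
        exact mul_ne_zero ha (inv_ne_zero hy) (by rw [← hk]; ring)
      · intro x hx
        rw [hmem] at hx
        have key : a * (a * x⁻¹ * x⁻¹)⁻¹ = x ^ 2 := by
          rw [mul_assoc, ← mul_inv, ← pow_two, mul_inv, inv_inv, ← mul_assoc,
            mul_inv_cancel₀ ha, one_mul]
        rw [key, sq_sqrtF hr hF]
      · intro y hy
        rw [hmem] at hy
        have hw2 : (sqrtF r (a * y⁻¹)) ^ 2 = a * y⁻¹ := sqrtF_sq hr hF _
        have hwne : sqrtF r (a * y⁻¹) ≠ 0 := by
          intro h0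
          rw [h0] at hw2
          exact mul_ne_zero ha (inv_ne_zero hy) (by rw [← hw2]; ring)
        have e : (sqrtF r (a * y⁻¹))⁻¹ * (sqrtF r (a * y⁻¹))⁻¹
            = ((sqrtF r (a * y⁻¹)) ^ 2)⁻¹ := by
          rw [← mul_inv, ← pow_two]
        rw [mul_assoc, e, hw2, mul_inv, inv_inv]
        field_simp
      · intro x _
        rfl
    rw [hbij, hsum_s]
  -- rewrite nested offdiagonal sums as sums over pairs
  have nest : ∀ G : F → F → ℚ, (∑ x ∈ s, ∑ y ∈ s.erase x, G x y)
      = ∑ p ∈ (s ×ˢ s).filter (fun p => p.1 ≠ p.2), G p.1 p.2 := by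
    intro G
    have h1 : ∑ p ∈ (s ×ˢ s).filter (fun p => p.1 ≠ p.2), G p.1 p.2
        = ∑ x ∈ s, ∑ y ∈ s.filter (fun y => x ≠ y), G x y := by
      rw [Finset.sum_filter (s := s ×ˢ s) (p := fun p => p.1 ≠ p.2)
        (f := fun p => G p.1 p.2), Finset.sum_product]
      exact Finset.sum_congr rfl fun x _ => (Finset.sum_filter _ _).symm
    rw [h1]
    exact Finset.sum_congr rfl fun x _ => by rw [Finset.filter_ne]
  have comp1 : ∀ {α β : F}, α + β ≠ 0 → (α + β) * (α * (α + β)⁻¹) = α := by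
    intro α β hu
    field_simp
  have comp2 : ∀ {α β : F}, α + β ≠ 0 → (α + β) * (α * (α + β)⁻¹ + 1) = β := by
    intro α β hu
    rw [mul_add, mul_one, comp1 hu]
    linear_combination hxx α
  have reidx : ∀ G : F → F → ℚ,
      (∑ p ∈ (s ×ˢ s).filter (fun p => p.1 ≠ p.2), G p.1 p.2)
      = ∑ p ∈ s ×ˢ s2, G (p.1 * p.2) (p.1 * (p.2 + 1)) := by
    intro G
    refine Finset.sum_nbij' (fun p => (p.1 + p.2, p.1 * (p.1 + p.2)⁻¹))
      (fun p => (p.1 * p.2, p.1 * (p.2 + 1))) ?_ ?_ ?_ ?_ ?_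
    · rintro ⟨α, β⟩ hp
      rw [Finset.mem_filter, Finset.mem_product, hmem, hmem] at hp
      obtain ⟨⟨hα, hβ⟩, hne⟩ := hp
      have hu : α + β ≠ 0 := hsum_ne hne
      rw [Finset.mem_product, hmem, hmem2]
      refine ⟨hu, mul_ne_zero hα (inv_ne_zero hu), ?_⟩
      intro h1
      have h1' : α = α + β := (mul_inv_eq_one₀ hu).mp h1
      exact hβ (by linear_combination -h1')
    · rintro ⟨u, γ⟩ hp
      rw [Finset.mem_product, hmem, hmem2] at hp
      obtain ⟨hu, hγ0, hγ1⟩ := hp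
      have hγp : γ + 1 ≠ 0 := hp1 hγ1
      rw [Finset.mem_filter, Finset.mem_product, hmem, hmem]
      refine ⟨⟨mul_ne_zero hu hγ0, mul_ne_zero hu hγp⟩, ?_⟩
      intro heq
      have hγγ : γ = γ + 1 := mul_left_cancel₀ hu heq
      exact one_ne_zero (α := F) (by linear_combination -hγγ)
    · rintro ⟨α, β⟩ hp
      rw [Finset.mem_filter, Finset.mem_product, hmem, hmem] at hp
      obtain ⟨⟨hα, hβ⟩, hne⟩ := hp
      have hu : α + β ≠ 0 := hsum_ne hne
      dsimp only
      rw [comp1 hu, comp2 hu]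
    · rintro ⟨u, γ⟩ hp
      rw [Finset.mem_product, hmem, hmem2] at hp
      obtain ⟨hu, hγ0, hγ1⟩ := hp
      dsimp only
      have key : u * γ + u * (γ + 1) = u := by linear_combination (u * γ) * h2
      rw [key]
      have key2 : u * γ * u⁻¹ = γ := by
        rw [mul_comm u γ, mul_assoc, mul_inv_cancel₀ hu, mul_one]
      rw [key2]
    · rintro ⟨α, β⟩ hp
      rw [Finset.mem_filter, Finset.mem_product, hmem, hmem] at hp
      obtain ⟨⟨hα, hβ⟩, hne⟩ := hp
      have hu : α + β ≠ 0 := hsum_ne hne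
      dsimp only
      rw [comp1 hu, comp2 hu]
  -- the inner substitution lemma
  have inner : ∀ m : F, (∑ u ∈ s, lam F r (u + m * u⁻¹))
      = ∑ u ∈ s, lam F r (u + m * (u⁻¹ * u⁻¹)) := by
    intro m
    have hc2 : (sqrtF r m) ^ 2 = m := sqrtF_sq hr hF m
    have hsq2 : ∀ x y : F, (x + y) ^ 2 = x ^ 2 + y ^ 2 := by
      intro x y
      linear_combination (x * y) * h2
    have hRHS : ∀ u ∈ s, lam F r (u + m * (u⁻¹ * u⁻¹))
        = lam F r (u + sqrtF r m * u⁻¹) := by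
      intro u _
      have e : u + m * (u⁻¹ * u⁻¹) = u + (sqrtF r m * u⁻¹) ^ 2 := by
        rw [mul_pow, hc2]; ring
      rw [e, lam_add hr hF, lam_sq _ hr hF, ← lam_add hr hF]
    have hLHS : (∑ u ∈ s, lam F r (u + m * u⁻¹))
        = ∑ v ∈ s, lam F r (v + sqrtF r m * v⁻¹) := by
      refine Finset.sum_nbij' (fun u => sqrtF r u) (fun v => v ^ 2) ?_ ?_ ?_ ?_ ?_
      · intro u hu
        rw [hmem] at hu ⊢
        intro h0
        have hk := sqrtF_sq hr hF u
        rw [h0] at hk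
        exact hu (by rw [← hk]; ring)
      · intro v hv
        rw [hmem] at hv ⊢
        exact pow_ne_zero _ hv
      · exact fun u _ => sqrtF_sq hr hF u
      · exact fun v _ => sq_sqrtF hr hF v
      · intro u hu
        rw [hmem] at hu
        have hw2 : (sqrtF r u) ^ 2 = u := sqrtF_sq hr hF u
        have e : u + m * u⁻¹ = (sqrtF r u + sqrtF r m * (sqrtF r u)⁻¹) ^ 2 := by
          calc u + m * u⁻¹
              = (sqrtF r u) ^ 2 + (sqrtF r m) ^ 2 * ((sqrtF r u) ^ 2)⁻¹ := by
                rw [hw2, hc2]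
            _ = (sqrtF r u + sqrtF r m * (sqrtF r u)⁻¹) ^ 2 := by
                rw [hsq2, mul_pow, inv_pow]
        rw [e, lam_sq _ hr hF]
    rw [hLHS]
    exact (Finset.sum_congr rfl hRHS).symm
  -- off-diagonal sums agree
  have hoff : (∑ x ∈ s, ∑ y ∈ s.erase x, lam F r (x + y + (a * x⁻¹ + a * y⁻¹)))
      = ∑ x ∈ s, ∑ y ∈ s.erase x, lam F r (x + y + a * x⁻¹ * y⁻¹) := by
    rw [nest (fun x y => lam F r (x + y + (a * x⁻¹ + a * y⁻¹))),
      nest (fun x y => lam F r (x + y + a * x⁻¹ * y⁻¹)),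
      reidx (fun x y => lam F r (x + y + (a * x⁻¹ + a * y⁻¹))),
      reidx (fun x y => lam F r (x + y + a * x⁻¹ * y⁻¹)),
      Finset.sum_product, Finset.sum_product, Finset.sum_comm,
      Finset.sum_comm (s := s) (t := s2)]
    refine Finset.sum_congr rfl fun γ hγ => ?_
    rw [hmem2] at hγ
    obtain ⟨hγ0, hγ1⟩ := hγ
    have hγp : γ + 1 ≠ 0 := hp1 hγ1
    have hinv : γ⁻¹ + (γ + 1)⁻¹ = (γ * (γ + 1))⁻¹ := by
      apply mul_left_cancel₀ (mul_ne_zero hγ0 hγp)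
      rw [mul_inv_cancel₀ (mul_ne_zero hγ0 hγp), mul_add]
      have e1 : γ * (γ + 1) * γ⁻¹ = γ + 1 := by
        rw [mul_comm γ (γ + 1), mul_assoc, mul_inv_cancel₀ hγ0, mul_one]
      have e2 : γ * (γ + 1) * (γ + 1)⁻¹ = γ := by
        rw [mul_assoc, mul_inv_cancel₀ hγp, mul_one]
      rw [e1, e2]
      linear_combination γ * h2
    have hterm1 : ∀ u ∈ s, lam F r (u * γ + u * (γ + 1) + (a * (u * γ)⁻¹ + a * (u * (γ + 1))⁻¹))
        = lam F r (u + a * (γ * (γ + 1))⁻¹ * u⁻¹) := by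
      intro u hu
      rw [hmem] at hu
      have key : u * γ + u * (γ + 1) = u := by linear_combination (u * γ) * h2
      congr 1
      rw [key, mul_inv, mul_inv, ← hinv]
      ring
    have hterm2 : ∀ u ∈ s, lam F r (u * γ + u * (γ + 1) + a * (u * γ)⁻¹ * (u * (γ + 1))⁻¹)
        = lam F r (u + a * (γ * (γ + 1))⁻¹ * (u⁻¹ * u⁻¹)) := by
      intro u hu
      rw [hmem] at hu
      have key : u * γ + u * (γ + 1) = u := by linear_combination (u * γ) * h2
      congr 1
      rw [key, mul_inv, mul_inv, mul_inv]
      ring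
    rw [Finset.sum_congr rfl hterm1, Finset.sum_congr rfl hterm2, inner]
  rw [hsplit] at hsq hKl2
  rw [hdiag1] at hsq
  rw [hdiag2, ← hoff] at hKl2
  rw [hKl2, hsq]
  push_cast
  ring
end
end

section
/- Let q = 2^r, let λ be the canonical additive character of F_q, let m be a positive integer, and let β ∈ F_q. Then Σ_{a ∈ F_q*} λ(−aβ)·K_m(λ;a) = q·K_{m−1}(λ; β^{−1}) + (−1)^{m+1} if β ≠ 0, and Σ_{a ∈ F_q*} λ(−aβ)·K_m(λ;a) = (−1)^{m+1} if β = 0, with the convention K₀(λ; β^{−1}) = λ(β^{−1}). -/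
open scoped Classical
open Finset Matrix

noncomputable section

/-! Since `q = 2 ^ r`, `tr` is the absolute trace of `F` over `ZMod 2`, so `λ` is a nontrivial
additive character `ψ`, and the identity holds for every such `ψ`. Expanding `K_m(a)` and summing
over `a` first, `∑_{a ∈ F*} ψ(a c) = q·[c = 0] − 1` leaves `q` times the sum of `ψ(α₁ + ⋯ + αₘ)`
over the fiber `∏ αᵢ⁻¹ = β`, minus `∑_α ψ(α₁ + ⋯ + αₘ) = (−1)^m`. The fiber is empty when
`β = 0`; otherwise solving for `α₁` turns the fiber sum into `K_{m−1}(ψ; β⁻¹)`. -/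

section TraceCharacter

variable (F : Type*) [Field F] [Algebra (ZMod 2) F]

def traceChar : AddChar F ℚ :=
  (AddChar.zmodChar 2 (by norm_num : (-1 : ℚ) ^ 2 = 1)).compAddMonoidHom
    (Algebra.trace (ZMod 2) F).toAddMonoidHom

lemma traceChar_apply (x : F) :
    traceChar F x = if Algebra.trace (ZMod 2) F x = 0 then 1 else -1 := by
  change (-1 : ℚ) ^ (Algebra.trace (ZMod 2) F x).val = _
  generalize Algebra.trace (ZMod 2) F x = t
  fin_cases t <;> rfl

lemma traceChar_ne_one [Finite F] : traceChar F ≠ 1 := by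
  obtain ⟨x, hx⟩ := Algebra.trace_surjective (ZMod 2) F 1
  refine AddChar.ne_one_iff.mpr ⟨x, ?_⟩
  rw [traceChar_apply, hx, if_neg one_ne_zero]
  norm_num

variable {F} [Fintype F] {r : ℕ}

lemma trF_eq_algebraMap_trace (hF : Fintype.card F = 2 ^ r) (x : F) :
    trF F r x = algebraMap (ZMod 2) F (Algebra.trace (ZMod 2) F x) := by
  have hrank : Module.finrank (ZMod 2) F = r := by
    rw [Module.card_eq_pow_finrank (K := ZMod 2), ZMod.card] at hF
    exact Nat.pow_right_injective le_rfl hF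
  rw [FiniteField.algebraMap_trace_eq_sum_pow, hrank, Nat.card_zmod, trF]

lemma lam_eq_traceChar (hF : Fintype.card F = 2 ^ r) : lam F r = traceChar F := by
  funext x
  simp only [lam, traceChar_apply, trF_eq_algebraMap_trace hF,
    map_eq_zero_iff _ (algebraMap (ZMod 2) F).injective]

end TraceCharacter

lemma AddChar.map_sum_eq_prod {A M ι : Type*} [AddCommMonoid A] [CommMonoid M] (ψ : AddChar A M)
    (s : Finset ι) (f : ι → A) : ψ (∑ i ∈ s, f i) = ∏ i ∈ s, ψ (f i) := by
  induction s using Finset.induction_on with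
  | empty => simp
  | insert i s hi ih => rw [sum_insert hi, prod_insert hi, AddChar.map_add_eq_mul, ih]

section Kloosterman

variable {F R : Type*} [Field F] [Fintype F] [CommRing R] (ψ : AddChar F R)

def kloostermanSum (m : ℕ) (a : F) : R :=
  ∑ α : Fin m → Fˣ, ψ ((∑ i, (α i : F)) + a * ∏ i, ((α i : F))⁻¹)

lemma Klm_eq_kloostermanSum [Algebra (ZMod 2) F] {r : ℕ} (hF : Fintype.card F = 2 ^ r) (m : ℕ) :
    Klm F r m = kloostermanSum (traceChar F) m := by
  funext a
  rw [Klm, lam_eq_traceChar hF, kloostermanSum]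

variable {ψ}

lemma sum_pi_units_ite_prod_inv_eq (m : ℕ) {β : F} (hβ : β ≠ 0) :
    ∑ α : Fin (m + 1) → Fˣ, (if ∏ i, ((α i : F))⁻¹ = β then ψ (∑ i, (α i : F)) else 0) =
      kloostermanSum ψ m β⁻¹ := by
  rw [← (Fin.consEquiv fun _ ↦ Fˣ).sum_comp, Fintype.sum_prod_type, sum_comm, kloostermanSum]
  refine sum_congr rfl fun γ _ ↦ ?_
  have hP : (∏ i, ((γ i : F))⁻¹) * β⁻¹ ≠ 0 :=
    mul_ne_zero (prod_ne_zero_iff.mpr fun i _ ↦ inv_ne_zero (γ i).ne_zero) (inv_ne_zero hβ)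
  have hfiber : ∀ u : Fˣ, (u : F)⁻¹ * ∏ i, ((γ i : F))⁻¹ = β ↔ u = Units.mk0 _ hP := by
    intro u
    rw [Units.ext_iff, Units.val_mk0, inv_mul_eq_iff_eq_mul₀ u.ne_zero, eq_mul_inv_iff_mul_eq₀ hβ]
    exact eq_comm
  simp only [Fin.consEquiv_apply, Fin.prod_univ_succ, Fin.sum_univ_succ, Fin.cons_zero,
    Fin.cons_succ, hfiber]
  rw [Fintype.sum_ite_eq', Units.val_mk0, add_comm, mul_comm]

variable [IsDomain R]

lemma sum_units_mulShift (hψ : ψ ≠ 1) (c : F) :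
    ∑ a : Fˣ, ψ (a * c) = (if c = 0 then (Fintype.card F : R) else 0) - 1 := by
  have hsplit := Fintype.sum_eq_add_sum_subtype_ne (fun x : F ↦ ψ (x * c)) 0
  rw [AddChar.sum_mulShift c (AddChar.IsPrimitive.of_ne_one hψ), zero_mul,
    AddChar.map_zero_eq_one] at hsplit
  rw [Fintype.sum_equiv unitsEquivNeZero (fun a : Fˣ ↦ ψ (a * c))
    (fun x : {x : F // x ≠ 0} ↦ ψ (x * c)) (fun _ ↦ rfl)]
  push_cast at hsplit
  rw [hsplit]
  ring

lemma sum_pi_units_map_sum (hψ : ψ ≠ 1) (m : ℕ) :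
    ∑ α : Fin m → Fˣ, ψ (∑ i, (α i : F)) = (-1) ^ m := by
  have hunits : ∑ a : Fˣ, ψ a = -1 := by
    simpa using sum_units_mulShift hψ 1
  simp_rw [AddChar.map_sum_eq_prod]
  rw [← Fintype.prod_sum (fun _ (a : Fˣ) ↦ ψ a), hunits, Fin.prod_const]

lemma sum_units_mul_kloostermanSum_succ (hψ : ψ ≠ 1) (m : ℕ) (β : F) :
    ∑ a : Fˣ, ψ (-(a : F) * β) * kloostermanSum ψ (m + 1) a =
      Fintype.card F * ∑ α : Fin (m + 1) → Fˣ,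
        (if ∏ i, ((α i : F))⁻¹ = β then ψ (∑ i, (α i : F)) else 0) + (-1) ^ (m + 2) := by
  have hexpand : ∀ (a : Fˣ) (α : Fin (m + 1) → Fˣ),
      ψ (-(a : F) * β) * ψ ((∑ i, (α i : F)) + a * ∏ i, ((α i : F))⁻¹) =
        ψ (∑ i, (α i : F)) * ψ (a * (∏ i, ((α i : F))⁻¹ - β)) := by
    intro a α
    rw [← AddChar.map_add_eq_mul, ← AddChar.map_add_eq_mul]
    congr 1
    ring
  calc ∑ a : Fˣ, ψ (-(a : F) * β) * kloostermanSum ψ (m + 1) a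
      = ∑ α : Fin (m + 1) → Fˣ, ψ (∑ i, (α i : F)) *
          ∑ a : Fˣ, ψ (a * (∏ i, ((α i : F))⁻¹ - β)) := by
        simp_rw [kloostermanSum, mul_sum, hexpand]
        exact sum_comm
    _ = ∑ α : Fin (m + 1) → Fˣ, (Fintype.card F *
          (if ∏ i, ((α i : F))⁻¹ = β then ψ (∑ i, (α i : F)) else 0) - ψ (∑ i, (α i : F))) := by
        refine sum_congr rfl fun α _ ↦ ?_
        rw [sum_units_mulShift hψ]
        simp only [sub_eq_zero]
        split_ifs <;> ring
    _ = _ := by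
        rw [sum_sub_distrib, ← mul_sum, sum_pi_units_map_sum hψ]
        ring

end Kloosterman

theorem twisted_sum_Klm_general
    (F : Type*) [Field F] [Fintype F] (r q : ℕ) (hq : q = 2 ^ r)
    (hF : Fintype.card F = q) (m : ℕ) (hm : 1 ≤ m) (β : F) :
    (β ≠ 0 →
      ∑ a : Fˣ, lam F r (-(a : F) * β) * Klm F r m (a : F) =
        (q : ℚ) * Klm F r (m - 1) β⁻¹ + (-1 : ℚ) ^ (m + 1)) ∧
    (β = 0 →
      ∑ a : Fˣ, lam F r (-(a : F) * β) * Klm F r m (a : F) = (-1 : ℚ) ^ (m + 1)) := by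
  obtain ⟨k, rfl⟩ : ∃ k, m = k + 1 := ⟨m - 1, by omega⟩
  subst hq
  have : CharP F 2 := charP_of_card_eq_prime_pow hF
  let := ZMod.algebra F 2
  simp only [Klm_eq_kloostermanSum hF, lam_eq_traceChar hF,
    sum_units_mul_kloostermanSum_succ (traceChar_ne_one F), hF, Nat.add_sub_cancel]
  refine ⟨fun hβ ↦ by rw [sum_pi_units_ite_prod_inv_eq _ hβ], fun hβ ↦ ?_⟩
  subst hβ
  simp [prod_eq_zero_iff]

/-- Proposition 8: twisted sums of `m`-dimensional Kloosterman
sums, with the convention `K₀(λ;b) = λ(b)`. -/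
theorem twisted_sum_Klm
    (F : Type*) [Field F] [Fintype F] (r q : ℕ) (hr : 0 < r) (hq : q = 2 ^ r)
    (hF : Fintype.card F = q) (m : ℕ) (hm : 1 ≤ m) (β : F) :
    (β ≠ 0 →
      ∑ a : Fˣ, lam F r (-(a : F) * β) * Klm F r m (a : F) =
        (q : ℚ) * Klm F r (m - 1) β⁻¹ + (-1 : ℚ) ^ (m + 1)) ∧
    (β = 0 →
      ∑ a : Fˣ, lam F r (-(a : F) * β) * Klm F r m (a : F) = (-1 : ℚ) ^ (m + 1)) :=
  twisted_sum_Klm_general F r q hq hF m hm β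
end
end

section
/- Let q = 2^r and for β ∈ F_q let N_{DC⁺(n,q)}(β) = |{w ∈ DC⁺(n,q) : Tr w = β}|. Then: (a) for every even n ≥ 4 and every q, and also for n = 2 and every q ≥ 4, N_{DC⁺(n,q)}(β) > 0 for all β ∈ F_q; (b) for n = 2 and q = 2, N_{DC⁺(2,2)}(1) = 0 and N_{DC⁺(2,2)}(0) = 48. -/
open scoped Classical
open Finset Matrix

noncomputable section

/-!
For `n ≥ 3` the matrix `[[1, c·E₁₁], [0, 1]] · σ_{n−2}` lies in `DC⁺(n,q)` and has trace
`Tr σ_{n−2} + c`, so every trace value occurs.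

For `n = 2` we have `σ₀ = 1`, so `DC⁺(2,q) = P(2,q)`, and an element of `P` with diagonal blocks
`A`, `ᵗA⁻¹` has trace `(1 + (det A)⁻¹) · Tr A`. Taking for `A` a companion matrix with prescribed
trace and a determinant `d ∉ {0, −1}` (possible once `q ≥ 3`) reaches every value. When `q = 2`
every determinant is `1`, so all traces vanish, and `|P(2,2)| = |GL(2,2)| · 2³ = 48`.
-/

section Parabolic

variable {F : Type*} [Field F] {n : ℕ}

lemma trace_fromBlocks_square {ι : Type*} [Fintype ι] (A B C D : Matrix ι ι F) :
    trace (fromBlocks A B C D) = trace A + trace D := by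
  simp [trace, Fintype.sum_sum_type]

def parabolicBlock (A B : Matrix (Fin n) (Fin n) F) : Mat F n :=
  fromBlocks A (A * B) 0 (A⁻¹)ᵀ

lemma mem_Pmat_iff {w : Mat F n} :
    w ∈ Pmat F n ↔ ∃ A B, IsUnit A ∧ Bᵀ = B ∧ w = parabolicBlock A B := by
  have hfactor : ∀ A B : Matrix (Fin n) (Fin n) F,
      fromBlocks A 0 0 (A⁻¹)ᵀ * fromBlocks 1 B 0 1 = parabolicBlock A B := by
    intro A B
    simp [parabolicBlock, fromBlocks_multiply]
  simp only [Pmat, Set.mem_ofPred_eq, hfactor]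

lemma parabolicBlock_mem_Pmat {A B : Matrix (Fin n) (Fin n) F} (hA : IsUnit A) (hB : Bᵀ = B) :
    parabolicBlock A B ∈ Pmat F n :=
  mem_Pmat_iff.2 ⟨A, B, hA, hB, rfl⟩

lemma parabolicBlock_mul_parabolicBlock (A B : Matrix (Fin n) (Fin n) F)
    {A' : Matrix (Fin n) (Fin n) F} (B' : Matrix (Fin n) (Fin n) F) (hA' : IsUnit A') :
    parabolicBlock A B * parabolicBlock A' B' =
      parabolicBlock (A * A') (B' + A'⁻¹ * B * (A'⁻¹)ᵀ) := by
  have hA'inv : A' * A'⁻¹ = 1 := mul_nonsing_inv A' ((isUnit_iff_isUnit_det A').1 hA')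
  simp only [parabolicBlock, fromBlocks_multiply, Matrix.mul_zero, Matrix.zero_mul, add_zero,
    zero_add, Matrix.mul_inv_rev, transpose_mul, Matrix.mul_add, ← Matrix.mul_assoc]
  rw [Matrix.mul_assoc A A' A'⁻¹, hA'inv, Matrix.mul_one]

lemma mul_mem_Pmat {p p' : Mat F n} (hp : p ∈ Pmat F n) (hp' : p' ∈ Pmat F n) :
    p * p' ∈ Pmat F n := by
  obtain ⟨A, B, hA, hB, rfl⟩ := mem_Pmat_iff.1 hp
  obtain ⟨A', B', hA', hB', rfl⟩ := mem_Pmat_iff.1 hp'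
  rw [parabolicBlock_mul_parabolicBlock A B B' hA']
  refine parabolicBlock_mem_Pmat (hA.mul hA') ?_
  rw [transpose_add, hB', transpose_mul, transpose_mul, transpose_transpose, hB,
    Matrix.mul_assoc]

lemma one_mem_Pmat : (1 : Mat F n) ∈ Pmat F n := by
  convert parabolicBlock_mem_Pmat isUnit_one (transpose_zero (m := Fin n) (n := Fin n) (α := F))
  simp [parabolicBlock, fromBlocks_one]

lemma sigmaMat_zero : sigmaMat F n 0 = 1 := by
  rw [sigmaMat, ← fromBlocks_one]
  congr <;> ext i j <;> simp [one_apply]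

lemma DCoset_zero : DCoset F n 0 = Pmat F n := by
  ext w
  simp only [DCoset, sigmaMat_zero, Matrix.mul_one, Set.mem_ofPred_eq]
  refine ⟨?_, fun hw => ⟨w, hw, 1, one_mem_Pmat, (Matrix.mul_one w).symm⟩⟩
  rintro ⟨p, hp, p', hp', rfl⟩
  exact mul_mem_Pmat hp hp'

lemma trace_parabolicBlock (A B : Matrix (Fin n) (Fin n) F) :
    trace (parabolicBlock A B) = trace A + trace A⁻¹ := by
  rw [parabolicBlock, trace_fromBlocks_square, trace_transpose]

lemma trace_inv_fin_two (A : Matrix (Fin 2) (Fin 2) F) : trace A⁻¹ = A.det⁻¹ * trace A := by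
  rw [Matrix.inv_def, trace_smul, Ring.inverse_eq_inv', adjugate_fin_two, trace_fin_two_of,
    trace_fin_two, smul_eq_mul, add_comm (A 1 1)]

lemma parabolicBlock_injective {u u' : GL (Fin n) F} {B B' : Matrix (Fin n) (Fin n) F}
    (h : parabolicBlock (u : Matrix (Fin n) (Fin n) F) B = parabolicBlock u' B') :
    u = u' ∧ B = B' := by
  have hu : (u : Matrix (Fin n) (Fin n) F) = u' := by
    simpa [parabolicBlock] using congrArg toBlocks₁₁ h
  refine ⟨Units.ext hu, u.isUnit.mul_left_cancel ?_⟩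
  simpa [parabolicBlock, hu] using congrArg toBlocks₁₂ h

end Parabolic

lemma exists_ne_zero_ne_neg_one {F : Type*} [Field F] [Fintype F] (h : 2 < Fintype.card F) :
    ∃ d : F, d ≠ 0 ∧ d ≠ -1 := by
  by_contra! hall
  have hsub : (Finset.univ : Finset F) ⊆ {0, -1} := fun d _ => by
    rw [Finset.mem_insert, Finset.mem_singleton]
    exact or_iff_not_imp_left.2 (hall d)
  have := (Finset.card_le_card hsub).trans Finset.card_le_two
  rw [Finset.card_univ] at this
  omega

section TraceValues

variable {F : Type*} [Field F]

lemma exists_mem_Pmat_two_trace_eq {d : F} (hd0 : d ≠ 0) (hd1 : d ≠ -1) (β : F) :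
    ∃ w ∈ Pmat F 2, trace w = β := by
  have hs : 1 + d⁻¹ ≠ 0 := by
    intro h
    rw [add_comm, add_eq_zero_iff_eq_neg, inv_eq_iff_eq_inv, inv_neg, inv_one] at h
    exact hd1 h
  set t := β / (1 + d⁻¹)
  -- companion matrix of `X² - tX + d`: trace `t`, determinant `d`
  set A : Matrix (Fin 2) (Fin 2) F := !![0, -d; 1, t]
  have hdet : A.det = d := by simp [A, det_fin_two_of]
  have hA : IsUnit A := (isUnit_iff_isUnit_det A).2 (hdet ▸ hd0.isUnit)
  refine ⟨parabolicBlock A 0, parabolicBlock_mem_Pmat hA transpose_zero, ?_⟩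
  rw [trace_parabolicBlock, trace_inv_fin_two, hdet, trace_fin_two_of, zero_add, ← one_add_mul,
    mul_div_cancel₀ _ hs]

lemma trace_eq_zero_of_mem_Pmat_two [Fintype F] (hF : Fintype.card F = 2) {w : Mat F 2}
    (hw : w ∈ Pmat F 2) : trace w = 0 := by
  obtain ⟨A, B, hA, -, rfl⟩ := mem_Pmat_iff.1 hw
  have hdet : A.det = 1 := by
    have hdet0 := ((isUnit_iff_isUnit_det A).1 hA).ne_zero
    simpa [hF] using FiniteField.pow_card_sub_one_eq_one A.det hdet0
  have htwo : (2 : F) = 0 := by exact_mod_cast hF ▸ FiniteField.cast_card_eq_zero F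
  rw [trace_parabolicBlock, trace_inv_fin_two, hdet, inv_one, one_mul, ← two_mul, htwo, zero_mul]

variable {n r : ℕ}

lemma exists_mem_DCoset_trace_eq (i : Fin n) (hi : (i : ℕ) < r) (β : F) :
    ∃ w ∈ DCoset F n r, trace w = β := by
  set c := β - trace (sigmaMat F n r)
  have hB : (single i i c)ᵀ = single i i c := by simp
  refine ⟨parabolicBlock 1 (single i i c) * sigmaMat F n r,
    ⟨_, parabolicBlock_mem_Pmat isUnit_one hB, 1, one_mem_Pmat, (Matrix.mul_one _).symm⟩, ?_⟩
  have hsplit : parabolicBlock 1 (single i i c) = 1 + single (Sum.inl i) (Sum.inr i) c := by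
    ext (a | a) (b | b) <;> simp [parabolicBlock, single, one_apply]
  rw [hsplit, Matrix.add_mul, Matrix.one_mul, trace_add, trace_single_mul]
  simp [sigmaMat, hi, c]

end TraceValues

lemma card_symmetric_fin_two {α : Type*} [Fintype α] :
    Fintype.card {B : Matrix (Fin 2) (Fin 2) α // Bᵀ = B} = Fintype.card α ^ 3 := by
  rw [pow_succ, pow_two, ← Fintype.card_prod, ← Fintype.card_prod]
  refine Fintype.card_congr
    { toFun := fun B => ((B.1 0 0, B.1 0 1), B.1 1 1)
      invFun := fun x => ⟨!![x.1.1, x.1.2; x.1.2, x.2], by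
        ext i j; fin_cases i <;> fin_cases j <;> rfl⟩
      left_inv := ?_
      right_inv := fun _ => rfl }
  rintro ⟨B, hB⟩
  have hB10 : B 1 0 = B 0 1 := congrFun (congrFun hB 0) 1
  ext i j
  fin_cases i <;> fin_cases j <;> simp [hB10]

section Counting

variable {F : Type*} [Field F] [Fintype F] {n : ℕ}

lemma card_Pmat :
    Fintype.card (Pmat F n) =
      Fintype.card (GL (Fin n) F) * Fintype.card {B : Matrix (Fin n) (Fin n) F // Bᵀ = B} := by
  rw [← Fintype.card_prod]
  refine (Fintype.card_of_bijective (f := fun x : GL (Fin n) F × {B // Bᵀ = B} =>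
    ⟨parabolicBlock (x.1 : Matrix (Fin n) (Fin n) F) x.2,
      parabolicBlock_mem_Pmat x.1.isUnit x.2.2⟩) ⟨?_, ?_⟩).symm
  · intro ⟨u, B, _⟩ ⟨u', B', _⟩ h
    obtain ⟨rfl, rfl⟩ := parabolicBlock_injective (Subtype.ext_iff.1 h)
    rfl
  · rintro ⟨w, hw⟩
    obtain ⟨A, B, hA, hB, rfl⟩ := mem_Pmat_iff.1 hw
    exact ⟨⟨hA.unit, B, hB⟩, rfl⟩

lemma card_Pmat_two_of_card_eq_two (hF : Fintype.card F = 2) : Fintype.card (Pmat F 2) = 48 := by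
  have hGL : Fintype.card (GL (Fin 2) F) = 6 := by
    rw [← Nat.card_eq_fintype_card, card_GL_field, Fin.prod_univ_two, hF]
    norm_num
  rw [card_Pmat, hGL, card_symmetric_fin_two, hF]
  norm_num

end Counting

lemma NDC_pos_iff {F : Type*} [Field F] [Fintype F] {n : ℕ} {S : Set (Mat F n)} {β : F} :
    0 < NDC F n S β ↔ ∃ w ∈ S, trace w = β := by
  simp [NDC, Finset.card_pos, Finset.filter_nonempty_iff]

theorem NDC_pos_positivity_general
    (F : Type*) [Field F] [Fintype F] (q : ℕ)
    (hF : Fintype.card F = q) (n : ℕ) :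
    ((Even n ∧ 4 ≤ n) ∨ (n = 2 ∧ 4 ≤ q) → ∀ β : F, 0 < NDC F n (DCpos F n) β) ∧
    (n = 2 → q = 2 →
      NDC F 2 (DCpos F 2) (1 : F) = 0 ∧ NDC F 2 (DCpos F 2) (0 : F) = 48) := by
  subst hF
  have hDC2 : DCpos F 2 = Pmat F 2 := DCoset_zero
  refine ⟨?_, ?_⟩
  · rintro (⟨-, hn⟩ | ⟨rfl, hF⟩) β <;> rw [NDC_pos_iff]
    · exact exists_mem_DCoset_trace_eq ⟨0, by omega⟩ (show 0 < n - 2 by omega) β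
    · obtain ⟨d, hd0, hd1⟩ := exists_ne_zero_ne_neg_one (F := F) (by omega)
      rw [hDC2]
      exact exists_mem_Pmat_two_trace_eq hd0 hd1 β
  · rintro rfl hF
    have htrace (w : Mat F 2) : w ∈ Pmat F 2 → trace w = 0 :=
      trace_eq_zero_of_mem_Pmat_two hF
    rw [NDC, NDC, hDC2]
    constructor
    · rw [Finset.card_eq_zero, Finset.filter_eq_empty_iff]
      rintro w - ⟨hw, h1⟩
      exact zero_ne_one ((htrace w hw).symm.trans h1)
    · rw [← card_Pmat_two_of_card_eq_two hF, Fintype.card_subtype]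
      congr
      ext w
      exact and_iff_left_of_imp (htrace w)

/-- Corollary 10(b): positivity of `N_{DC⁺(n,q)}(β)` for even
`n ≥ 4` (all `q`) and for `n = 2`, `q ≥ 4`; and the exceptional values for
`n = 2`, `q = 2`. -/
theorem NDC_pos_positivity
    (F : Type*) [Field F] [Fintype F] (r q : ℕ) (hr : 0 < r) (hq : q = 2 ^ r)
    (hF : Fintype.card F = q) (n : ℕ) :
    ((Even n ∧ 4 ≤ n) ∨ (n = 2 ∧ 4 ≤ q) → ∀ β : F, 0 < NDC F n (DCpos F n) β) ∧
    (n = 2 → q = 2 →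
      NDC F 2 (DCpos F 2) (1 : F) = 0 ∧ NDC F 2 (DCpos F 2) (0 : F) = 48) :=
  NDC_pos_positivity_general F q hF n
end
end

section
/- Let q = 2^r and let n be odd (for DC⁻) or even (for DC⁺). Let N = |DC^∓(n,q)| and let C_j^∓(n,q) denote the number of codewords of Hamming weight j in the code C(DC^∓(n,q)). Then the weight distribution is symmetric: C_j^∓(n,q) = C_{N−j}^∓(n,q) for all j with 0 ≤ j ≤ N. -/
open scoped Classical
open Finset Matrix

noncomputable section

namespace WDS

variable {F : Type*} [Field F] [Fintype F] {n k : ℕ}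

/-- The symplectic form matrix `J`. -/
def Jmat (F : Type*) [Field F] (n : ℕ) : Mat F n := Matrix.fromBlocks 0 1 1 0

lemma Jmat_mul_Jmat : Jmat F n * Jmat F n = 1 := by
  simp [Jmat, Matrix.fromBlocks_multiply, ← Matrix.fromBlocks_one]

lemma Jmat_transpose : (Jmat F n)ᵀ = Jmat F n := by
  simp [Jmat, Matrix.fromBlocks_transpose]

lemma Jmat_mul_Jmat_mul (X : Mat F n) : Jmat F n * (Jmat F n * X) = X := by
  rw [← mul_assoc, Jmat_mul_Jmat, one_mul]

lemma of_ite_eq_diagonal (P : Fin n → Prop) [DecidablePred P] :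
    (Matrix.of fun i j : Fin n => if i = j ∧ P i then (1:F) else 0)
      = Matrix.diagonal (fun i => if P i then 1 else 0) := by
  ext i j
  by_cases h : i = j
  · subst h; simp [Matrix.diagonal_apply_eq]
  · simp [Matrix.diagonal_apply_ne _ h, h]

lemma sigma_eq : sigmaMat F n k =
    Matrix.fromBlocks
      (Matrix.diagonal fun i : Fin n => if k ≤ (i : ℕ) then (1 : F) else 0)
      (Matrix.diagonal fun i : Fin n => if (i : ℕ) < k then (1 : F) else 0)
      (Matrix.diagonal fun i : Fin n => if (i : ℕ) < k then (1 : F) else 0)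
      (Matrix.diagonal fun i : Fin n => if k ≤ (i : ℕ) then (1 : F) else 0) := by
  unfold sigmaMat
  rw [of_ite_eq_diagonal, of_ite_eq_diagonal]

lemma sigma_transpose : (sigmaMat F n k)ᵀ = sigmaMat F n k := by
  rw [sigma_eq, Matrix.fromBlocks_transpose]
  simp [Matrix.diagonal_transpose]

lemma J_sigma_J : Jmat F n * sigmaMat F n k * Jmat F n = sigmaMat F n k := by
  rw [sigma_eq, Jmat, Matrix.fromBlocks_multiply, Matrix.fromBlocks_multiply]
  simp

lemma sigma_J_sigma : sigmaMat F n k * Jmat F n * sigmaMat F n k = Jmat F n := by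
  rw [sigma_eq, Jmat]
  set D := Matrix.diagonal fun i : Fin n => if k ≤ (i : ℕ) then (1 : F) else 0 with hD
  set E := Matrix.diagonal fun i : Fin n => if (i : ℕ) < k then (1 : F) else 0 with hE
  have hfDE : (fun i : Fin n => (if k ≤ (i:ℕ) then (1:F) else 0) * (if (i:ℕ) < k then (1:F) else 0))
      = fun _ => 0 := by
    funext i; by_cases h : k ≤ (i : ℕ) <;> simp [h, not_lt.mpr]
  have hfED : (fun i : Fin n => (if (i:ℕ) < k then (1:F) else 0) * (if k ≤ (i:ℕ) then (1:F) else 0))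
      = fun _ => 0 := by
    funext i; by_cases h : k ≤ (i : ℕ) <;> simp [h, not_lt.mpr]
  have hfS : (fun i : Fin n => (if (i:ℕ) < k then (1:F) else 0) * (if (i:ℕ) < k then (1:F) else 0)
      + (if k ≤ (i:ℕ) then (1:F) else 0) * (if k ≤ (i:ℕ) then (1:F) else 0)) = fun _ => 1 := by
    funext i; by_cases h : k ≤ (i : ℕ) <;> simp [h, not_le.mp]
  have hDE : D * E = 0 := by
    rw [hD, hE, Matrix.diagonal_mul_diagonal, hfDE, Matrix.diagonal_zero]
  have hED : E * D = 0 := by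
    rw [hD, hE, Matrix.diagonal_mul_diagonal, hfED, Matrix.diagonal_zero]
  have hEEDD : E * E + D * D = 1 := by
    rw [hD, hE, Matrix.diagonal_mul_diagonal, Matrix.diagonal_mul_diagonal,
      Matrix.diagonal_add, hfS, Matrix.diagonal_one]
  have hDDEE : D * D + E * E = 1 := by rw [add_comm]; exact hEEDD
  rw [Matrix.fromBlocks_multiply, Matrix.fromBlocks_multiply]
  simp only [Matrix.mul_zero, Matrix.zero_mul, Matrix.mul_one, Matrix.one_mul,
    add_zero, zero_add, hDE, hED, hEEDD, hDDEE]

lemma Pmat_mem_iff {p : Mat F n} : p ∈ Pmat F n ↔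
    ∃ A B : Matrix (Fin n) (Fin n) F, IsUnit A ∧ Bᵀ = B ∧
      p = Matrix.fromBlocks A (A * B) 0 (A⁻¹)ᵀ := by
  constructor
  · rintro ⟨A, B, hA, hB, rfl⟩
    exact ⟨A, B, hA, hB, by simp [Matrix.fromBlocks_multiply]⟩
  · rintro ⟨A, B, hA, hB, rfl⟩
    exact ⟨A, B, hA, hB, by simp [Matrix.fromBlocks_multiply]⟩

/-- `P` is stable under `p ↦ J pᵀ J`. -/
lemma Pmat_J_transpose {p : Mat F n} (hp : p ∈ Pmat F n) :
    Jmat F n * pᵀ * Jmat F n ∈ Pmat F n := by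
  rw [Pmat_mem_iff] at hp ⊢
  obtain ⟨A, B, hA, hB, rfl⟩ := hp
  have hdet : IsUnit A.det := (Matrix.isUnit_iff_isUnit_det _).mp hA
  refine ⟨A⁻¹, A * B * Aᵀ, ?_, ?_, ?_⟩
  · exact (Matrix.isUnit_iff_isUnit_det _).mpr (Matrix.isUnit_nonsing_inv_det _ hdet)
  · calc (A * B * Aᵀ)ᵀ = Aᵀᵀ * (Bᵀ * Aᵀ) := by
          rw [Matrix.transpose_mul, Matrix.transpose_mul]
    _ = A * B * Aᵀ := by rw [Matrix.transpose_transpose, hB, mul_assoc]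
  · rw [Matrix.nonsing_inv_nonsing_inv _ hdet, mul_assoc A B Aᵀ,
      Matrix.nonsing_inv_mul_cancel_left _ _ hdet]
    rw [Jmat, Matrix.fromBlocks_transpose, Matrix.fromBlocks_multiply,
      Matrix.fromBlocks_multiply]
    simp only [Matrix.mul_zero, Matrix.zero_mul, Matrix.mul_one, Matrix.one_mul,
      add_zero, zero_add, Matrix.transpose_zero, Matrix.transpose_transpose]
    rw [Matrix.transpose_mul, hB]

/-- Elements of `P` are symplectic (char 2). -/
lemma Pmat_symplectic (h2 : (2 : F) = 0) {p : Mat F n} (hp : p ∈ Pmat F n) :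
    pᵀ * Jmat F n * p = Jmat F n := by
  rw [Pmat_mem_iff] at hp
  obtain ⟨A, B, hA, hB, rfl⟩ := hp
  have hdet : IsUnit A.det := (Matrix.isUnit_iff_isUnit_det _).mp hA
  have hAi : Aᵀ * (A⁻¹)ᵀ = 1 := by
    rw [← Matrix.transpose_mul, Matrix.nonsing_inv_mul _ hdet, Matrix.transpose_one]
  have hkey : A⁻¹ * (A * B) + (A * B)ᵀ * (A⁻¹)ᵀ = 0 := by
    rw [Matrix.nonsing_inv_mul_cancel_left _ _ hdet, ← Matrix.transpose_mul,
      Matrix.nonsing_inv_mul_cancel_left _ _ hdet, hB]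
    ext i j
    simp only [Matrix.add_apply, Matrix.zero_apply]
    rw [← two_mul, h2, zero_mul]
  rw [Jmat, Matrix.fromBlocks_transpose, Matrix.fromBlocks_multiply,
    Matrix.fromBlocks_multiply]
  simp only [Matrix.mul_zero, Matrix.zero_mul, Matrix.mul_one, Matrix.one_mul,
    add_zero, zero_add, Matrix.transpose_zero, Matrix.transpose_transpose]
  rw [Matrix.nonsing_inv_mul _ hdet, hAi, hkey]

lemma J_sigma_J_mul (X : Mat F n) :
    Jmat F n * (sigmaMat F n k * (Jmat F n * X)) = sigmaMat F n k * X := by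
  rw [← mul_assoc, ← mul_assoc, J_sigma_J]

lemma iota_mem {w : Mat F n} (hw : w ∈ DCoset F n k) :
    Jmat F n * wᵀ * Jmat F n ∈ DCoset F n k := by
  obtain ⟨p, hp, p', hp', rfl⟩ := hw
  refine ⟨_, Pmat_J_transpose hp', _, Pmat_J_transpose hp, ?_⟩
  rw [Matrix.transpose_mul, Matrix.transpose_mul, sigma_transpose]
  simp only [mul_assoc]
  rw [J_sigma_J_mul]

lemma iota_trace (w : Mat F n) :
    Matrix.trace (Jmat F n * wᵀ * Jmat F n) = Matrix.trace w := by
  rw [Matrix.trace_mul_comm, ← mul_assoc, Jmat_mul_Jmat, one_mul, Matrix.trace_transpose]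

lemma iota_iota (w : Mat F n) :
    Jmat F n * (Jmat F n * wᵀ * Jmat F n)ᵀ * Jmat F n = w := by
  rw [Matrix.transpose_mul, Matrix.transpose_mul, Jmat_transpose, Matrix.transpose_transpose]
  simp only [mul_assoc]
  simp only [Jmat_mul_Jmat_mul]
  rw [Jmat_mul_Jmat, mul_one]

lemma DC_symplectic (h2 : (2 : F) = 0) {w : Mat F n} (hw : w ∈ DCoset F n k) :
    wᵀ * Jmat F n * w = Jmat F n := by
  obtain ⟨p, hp, p', hp', rfl⟩ := hw
  have h1 := Pmat_symplectic h2 hp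
  have h1' := Pmat_symplectic h2 hp'
  have key : ∀ X : Mat F n, pᵀ * (Jmat F n * (p * X)) = Jmat F n * X := fun X => by
    rw [← mul_assoc, ← mul_assoc, h1]
  have keyσ : ∀ X : Mat F n,
      sigmaMat F n k * (Jmat F n * (sigmaMat F n k * X)) = Jmat F n * X := fun X => by
    rw [← mul_assoc, ← mul_assoc, sigma_J_sigma]
  rw [Matrix.transpose_mul, Matrix.transpose_mul, sigma_transpose]
  simp only [mul_assoc]
  rw [key, keyσ, ← mul_assoc, h1']

lemma fixed_trace_zero (h2 : (2 : F) = 0) {w : Mat F n} (hw : w ∈ DCoset F n k)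
    (hfix : Jmat F n * wᵀ * Jmat F n = w) : Matrix.trace w = 0 := by
  have hs := DC_symplectic h2 hw
  have hinv : (Jmat F n * wᵀ * Jmat F n) * w = 1 := by
    rw [mul_assoc, mul_assoc, ← mul_assoc wᵀ, hs, Jmat_mul_Jmat]
  have hww : w * w = 1 := by nth_rewrite 1 [← hfix]; exact hinv
  have h11 : (1 : Mat F n) + 1 = 0 := by
    ext i j
    by_cases h : i = j
    · subst h
      simp only [Matrix.add_apply, Matrix.one_apply_eq, Matrix.zero_apply]
      rw [← two_mul, h2, zero_mul]
    · simp [Matrix.one_apply_ne h]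
  have hww0 : w + w = 0 := by
    ext i j
    simp only [Matrix.add_apply, Matrix.zero_apply]
    rw [← two_mul, h2, zero_mul]
  set N := w + 1 with hN
  have hN2 : N * N = 0 := by
    have hexp : N * N = w * w + (w + w) + 1 := by rw [hN]; noncomm_ring
    rw [hexp, hww, hww0, add_zero, h11]
  have hnil : IsNilpotent N := ⟨2, by rw [pow_two]; exact hN2⟩
  have htr : Matrix.trace N = 0 :=
    (Matrix.isNilpotent_trace_of_isNilpotent hnil).eq_zero
  have hw' : w = N + 1 := by rw [hN, add_assoc, h11, add_zero]
  rw [hw', Matrix.trace_add, htr, Matrix.trace_one, zero_add]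
  rw [Fintype.card_sum, Fintype.card_fin]
  push_cast
  rw [← two_mul, h2, zero_mul]

lemma sum_trace_zero (h2 : (2 : F) = 0) :
    ∑ w : (DCoset F n k), Matrix.trace (w : Mat F n) = 0 := by
  refine Finset.sum_ninvolution
    (fun w : (DCoset F n k) => ⟨Jmat F n * (w : Mat F n)ᵀ * Jmat F n, iota_mem w.2⟩)
    (fun a => ?_) (fun a hfa hga => ?_) (fun a => Finset.mem_univ _)
    (fun a => Subtype.ext (iota_iota (a : Mat F n)))
  · show Matrix.trace (a : Mat F n) + Matrix.trace (Jmat F n * (a : Mat F n)ᵀ * Jmat F n) = 0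
    rw [iota_trace, ← two_mul, h2, zero_mul]
  · exact hfa (fixed_trace_zero h2 a.2 (congrArg Subtype.val hga))

lemma weight_symm (h2 : (2 : F) = 0) (S : Set (Mat F n))
    (hsum : ∑ w : S, Matrix.trace (w : Mat F n) = 0) (j : ℕ) (hj : j ≤ S.ncard) :
    weightCount F n S j = weightCount F n S (S.ncard - j) := by
  have hcard : (Finset.univ : Finset S).card = S.ncard := by
    rw [Finset.card_univ, ← Nat.card_eq_fintype_card, Nat.card_coe_set_eq]
  set c : (S → ZMod 2) → (S → ZMod 2) := fun u w => u w + 1 with hc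
  have hv : ∀ v : ZMod 2, (v + 1 = 1) ↔ ¬(v = 1) := by decide
  have hW : ∀ u : S → ZMod 2, wordWeight (c u) = S.ncard - wordWeight u := by
    intro u
    unfold wordWeight
    have heq : (Finset.univ.filter fun x => c u x = 1)
        = (Finset.univ.filter fun x => ¬ (u x = 1)) := by
      apply Finset.filter_congr
      intro x _
      exact hv (u x)
    rw [heq, Finset.filter_not, Finset.card_sdiff_of_subset (Finset.filter_subset _ _), hcard]
  have hC : ∀ u : S → ZMod 2,
      (∑ w : S, if u w = 1 then Matrix.trace (w : Mat F n) else 0) = 0 →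
      (∑ w : S, if c u w = 1 then Matrix.trace (w : Mat F n) else 0) = 0 := by
    intro u hu
    have hsplit : ∀ w : S, (if c u w = 1 then Matrix.trace (w : Mat F n) else 0)
        = Matrix.trace (w : Mat F n) - (if u w = 1 then Matrix.trace (w : Mat F n) else 0) := by
      intro w
      have : (c u w = 1) ↔ ¬ (u w = 1) := hv (u w)
      by_cases h : u w = 1 <;> simp [this, h]
    rw [Finset.sum_congr rfl (fun w _ => hsplit w), Finset.sum_sub_distrib, hsum, hu, sub_zero]
  have hinv : ∀ u, c (c u) = u := by
    intro u; funext w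
    show u w + 1 + 1 = u w
    rw [add_assoc, show (1 + 1 : ZMod 2) = 0 from rfl, add_zero]
  unfold weightCount
  apply Nat.card_congr
  refine ⟨fun u => ⟨c u.1, hC u.1 u.2.1, ?_⟩, fun u => ⟨c u.1, hC u.1 u.2.1, ?_⟩, ?_, ?_⟩
  · rw [hW, u.2.2]
  · rw [hW, u.2.2, Nat.sub_sub_self hj]
  · intro u; exact Subtype.ext (hinv u.1)
  · intro u; exact Subtype.ext (hinv u.1)

end WDS

/-- Corollary 16: the weight distributions of the codes
`C(DC^∓(n,q))` are symmetric: `C_j = C_{N−j}`. -/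
theorem weight_distribution_symmetric
    (F : Type*) [Field F] [Fintype F] (r q : ℕ) (hr : 0 < r) (hq : q = 2 ^ r)
    (hF : Fintype.card F = q) (n : ℕ) :
    (Odd n → ∀ j : ℕ, j ≤ (DCneg F n).ncard →
      weightCount F n (DCneg F n) j =
        weightCount F n (DCneg F n) ((DCneg F n).ncard - j)) ∧
    (Even n → 2 ≤ n → ∀ j : ℕ, j ≤ (DCpos F n).ncard →
      weightCount F n (DCpos F n) j =
        weightCount F n (DCpos F n) ((DCpos F n).ncard - j)) := by
  have h2 : (2 : F) = 0 := by
    have hcard : ((Fintype.card F : ℕ) : F) = 0 := FiniteField.cast_card_eq_zero F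
    rw [hF, hq] at hcard
    have hpow : (2 : F) ^ r = 0 := by
      rw [← hcard]; push_cast; ring
    exact (pow_eq_zero_iff hr.ne').mp hpow
  constructor
  · intro _ j hj
    exact WDS.weight_symm h2 (DCneg F n) (WDS.sum_trace_zero h2) j hj
  · intro _ _ j hj
    exact WDS.weight_symm h2 (DCpos F n) (WDS.sum_trace_zero h2) j hj
end
end
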